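/- Let x be a random variable in an operator-valued probability space with E[x] invertible. Then I·Φ_x = (I·C_x)∘[(1 + I·Φ_x)·I], where Φ_x is the moment series and C_x the cumulant series of x. -/

import Mathlib

open scoped BigOperators

/-- A multilinear function series over `B`: a sequence of `n`-ary `B`-valued functions
(multilinearity is imposed separately via `MLS.IsMultilinear`). -/
abbrev MLS (B : Type*) : Type _ := ∀ n : ℕ, (Fin n → B) → B

namespace MLS

variable {B : Type*}

/-- The constant term `F₀` of a multilinear function series. -/
def const (F : MLS B) : B := F 0 Fin.elim0

/-- `F` is a multilinear function series (over the base ring `R`): every component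
agrees with an `R`-multilinear map. -/
def IsMultilinear (R : Type*) [CommRing R] {B : Type*} [Ring B] [Algebra R B]
    (F : MLS B) : Prop :=
  ∀ n : ℕ, ∃ M : MultilinearMap R (fun _ : Fin n => B) B, ∀ b : Fin n → B, M b = F n b

/-- Componentwise sum of multilinear function series. -/
def add [Ring B] (F G : MLS B) : MLS B := fun n b => F n b + G n b

/-- Dykema's product of multilinear function series:
`(F·G)ₙ(b₁,…,bₙ) = ∑ₖ Fₖ(b₁,…,bₖ)·G_{n-k}(b_{k+1},…,bₙ)`. -/
def mul [Ring B] (F G : MLS B) : MLS B := fun n b =>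
  ∑ k : Fin (n + 1),
    F k.val (fun i : Fin k.val => b (Fin.castLE (Nat.lt_succ_iff.mp k.isLt) i)) *
      G (n - k.val) (fun i : Fin (n - k.val) =>
        b ⟨k.val + i.val, by have h1 := i.isLt; have h2 := k.isLt; omega⟩)

/-- The unit series `1`, with constant term `1` and vanishing higher terms. -/
def one [Ring B] : MLS B := fun n _ => if n = 0 then 1 else 0

/-- The identity series `I`, with `I₁(b) = b` and all other components zero. -/
def idS [Ring B] : MLS B := fun n b => if h : n = 1 then b ⟨0, by omega⟩ else 0

/-- Composition of multilinear function series (appropriate when `const G = 0`):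
`(F∘G)ₙ(b₁,…,bₙ) = ∑_{p₁+⋯+p_k=n, pᵢ ≥ 1} F_k(G_{p₁}(…), …, G_{p_k}(…))`,
with `(F∘G)₀ = F₀`. -/
def comp [Ring B] (F G : MLS B) : MLS B := fun n b =>
  ∑ c : Composition n,
    F c.length (fun i : Fin c.length =>
      G (c.blocksFun i) (fun j : Fin (c.blocksFun i) => b (c.embedding i j)))

end MLS

namespace MLS

variable {B : Type*} [Ring B]

set_option linter.unusedSectionVars false

theorem apply_congr (F : MLS B) {m m' : ℕ} (h : m = m') {b : Fin m → B} {b' : Fin m' → B}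
    (hb : ∀ (i : ℕ) (h1 : i < m) (h2 : i < m'), b ⟨i, h1⟩ = b' ⟨i, h2⟩) :
    F m b = F m' b' := by
  subst h
  exact congrArg (F m) (funext fun i => by simpa using hb i.val i.isLt i.isLt)

theorem mul_add' (F G H : MLS B) : F.mul (G.add H) = (F.mul G).add ((F.mul H)) := by
  funext n b
  simp [mul, add, _root_.mul_add, Finset.sum_add_distrib]

theorem add_mul' (F G H : MLS B) : (F.add G).mul H = (F.mul H).add ((G.mul H)) := by
  funext n b
  simp [mul, add, _root_.add_mul, Finset.sum_add_distrib]

theorem one_mul' (F : MLS B) : one.mul F = F := by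
  funext n b
  rw [mul, Fin.sum_univ_succ]
  rw [Finset.sum_eq_zero (fun k _ => by simp [one]), add_zero]
  simp only [one, Fin.val_zero]
  simp only [if_true]
  rw [_root_.one_mul]
  refine apply_congr F ?_ (fun i h1 h2 => ?_)
  · omega
  · congr 1
    exact Fin.ext (by simp)

set_option maxHeartbeats 1000000 in
theorem mul_assoc' (F G H : MLS B) : (F.mul G).mul H = F.mul (G.mul H) := by
  funext n b
  simp only [mul, Finset.sum_mul, Finset.mul_sum]
  rw [Finset.sum_sigma', Finset.sum_sigma']
  refine Fintype.sum_equiv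
    ⟨fun p => ⟨⟨p.2.val, by have := p.1.isLt; have := p.2.isLt; omega⟩,
               ⟨p.1.val - p.2.val, by
                  show p.1.val - p.2.val < n - p.2.val + 1
                  have := p.1.isLt; have := p.2.isLt; omega⟩⟩,
     fun p => ⟨⟨p.1.val + p.2.val, by have := p.1.isLt; have := p.2.isLt; omega⟩,
               ⟨p.1.val, by show p.1.val < p.1.val + p.2.val + 1; omega⟩⟩, ?_, ?_⟩ _ _ ?_
  · rintro ⟨k, j⟩
    have hj := j.isLt
    refine Sigma.ext (Fin.ext ?_) ((Fin.heq_ext_iff ?_).mpr ?_) <;>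
      first | (simp; omega) | simp | omega
  · rintro ⟨j, m⟩
    have hj := j.isLt; have hm := m.isLt
    refine Sigma.ext (Fin.ext ?_) ((Fin.heq_ext_iff ?_).mpr ?_) <;>
      first | (simp; omega) | simp | omega
  · rintro ⟨k, j⟩
    have hj := j.isLt; have hk := k.isLt
    simp only [Equiv.coe_fn_mk]
    refine (_root_.mul_assoc _ _ _).trans ?_
    refine congrArg₂ HMul.hMul
      (apply_congr F rfl fun i h1 h2 => congrArg b (Fin.ext (by simp)))
      (congrArg₂ HMul.hMul
        (apply_congr G rfl fun i h1 h2 => congrArg b (Fin.ext (by simp)))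
        (apply_congr H (by omega) fun i h1 h2 => congrArg b (Fin.ext (by simp; omega))))

theorem idS_comp (H : MLS B) (h0 : ∀ b : Fin 0 → B, H 0 b = 0) : idS.comp H = H := by
  funext n b
  rcases Nat.eq_zero_or_pos n with hn | hn
  · subst hn
    rw [comp, h0]
    refine Finset.sum_eq_zero fun c _ => ?_
    have hb : c.blocks = [] := by
      cases hb : c.blocks with
      | nil => rfl
      | cons x l =>
        have hx := c.blocks_pos (hb ▸ List.mem_cons_self (a := x) (l := l))
        have hs := c.blocks_sum
        rw [hb] at hs
        simp at hs
        omega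
    have hlen : c.length = 0 := by simp [Composition.length, hb]
    simp [idS, hlen]
  · rw [comp]
    rw [Finset.sum_eq_single (Composition.single n hn)]
    · rw [show idS (Composition.single n hn).length = fun b' : Fin 1 → B => b' ⟨0, one_pos⟩ from rfl]
      refine apply_congr H (Composition.single_blocksFun hn _) (fun i h1 h2 => ?_)
      congr 1
      exact Fin.ext (by change (Composition.single n hn).sizeUpTo 0 + i = i; simp)
    · intro c _ hc
      have : c.length ≠ 1 := fun h => hc ((Composition.eq_single_iff_length hn).mpr h)
      simp [idS, this]
    · intro h
      exact absurd (Finset.mem_univ _) h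

theorem comp_heq {m m' : ℕ} (h : m = m') {c : Composition m} {c' : Composition m'}
    (hb : c.blocks = c'.blocks) : HEq c c' := by
  subst h
  exact heq_of_eq (by ext1; exact hb)

universe uu vv in
theorem prod_heq {α α' : Type uu} {β β' : Type vv} (ha : α = α') (hb : β = β') {p : α × β} {p' : α' × β'}
    (h1 : HEq p.1 p'.1) (h2 : HEq p.2 p'.2) : HEq p p' := by
  subst ha; subst hb
  rw [heq_eq_eq] at h1 h2 ⊢
  exact Prod.ext h1 h2

def splitEquiv (n : ℕ) : (Σ c : Composition n, Fin (c.length + 1)) ≃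
    (Σ k : Fin (n + 1), Composition k.val × Composition (n - k.val)) where
  toFun p := ⟨⟨p.1.sizeUpTo p.2.val, Nat.lt_succ_of_le (p.1.sizeUpTo_le _)⟩,
    ⟨p.1.blocks.take p.2.val, fun hm => p.1.blocks_pos (List.take_subset _ _ hm), rfl⟩,
    ⟨p.1.blocks.drop p.2.val, fun hm => p.1.blocks_pos (List.drop_subset _ _ hm), by
      have h2 := congrArg List.sum (List.take_append_drop p.2.val p.1.blocks)
      rw [List.sum_append] at h2
      have h3 := p.1.blocks_sum
      have h4 : p.1.sizeUpTo p.2.val ≤ n := p.1.sizeUpTo_le _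
      have h5 : p.1.sizeUpTo p.2.val = (p.1.blocks.take p.2.val).sum := rfl
      show (p.1.blocks.drop p.2.val).sum = n - p.1.sizeUpTo p.2.val
      omega⟩⟩
  invFun q := ⟨⟨q.2.1.blocks ++ q.2.2.blocks, fun hm => by
      rcases List.mem_append.mp hm with h | h
      exacts [q.2.1.blocks_pos h, q.2.2.blocks_pos h], by
      rw [List.sum_append, q.2.1.blocks_sum, q.2.2.blocks_sum]
      have := q.1.isLt; omega⟩,
    ⟨q.2.1.length, by
      show q.2.1.length < (q.2.1.blocks ++ q.2.2.blocks).length + 1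
      rw [List.length_append]
      have h : q.2.1.length = q.2.1.blocks.length := rfl
      omega⟩⟩
  left_inv p := by
    obtain ⟨c, j⟩ := p
    have hj := j.isLt
    have hcb : c.length = c.blocks.length := rfl
    refine Sigma.ext ?_ ?_
    · ext1
      exact List.take_append_drop _ _
    · refine (Fin.heq_ext_iff ?_).mpr ?_
      · show (c.blocks.take j.val ++ c.blocks.drop j.val).length + 1 = c.length + 1
        rw [List.take_append_drop]
      · show (c.blocks.take j.val).length = j.val
        rw [List.length_take]
        omega
  right_inv q := by
    obtain ⟨k, c1, c2⟩ := q
    have hc1 : c1.length = c1.blocks.length := rfl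
    have hk : ((c1.blocks ++ c2.blocks).take c1.length).sum = k.val := by
      rw [hc1, List.take_left, c1.blocks_sum]
    refine Sigma.ext (Fin.ext ?_) ?_
    · simpa [Composition.sizeUpTo] using hk
    · refine prod_heq ?_ ?_ ?_ ?_
      · dsimp only [Composition.sizeUpTo]
        rw [hk]
      · dsimp only [Composition.sizeUpTo]
        rw [hk]
      · refine comp_heq ?_ ?_
        · dsimp only [Composition.sizeUpTo]; exact hk
        · dsimp only
          rw [hc1]; exact List.take_left
      · refine comp_heq ?_ ?_
        · dsimp only [Composition.sizeUpTo]; rw [hk]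
        · dsimp only
          rw [hc1]; exact List.drop_left
set_option maxHeartbeats 1000000 in
theorem mul_comp (F G H : MLS B) : (F.mul G).comp H = (F.comp H).mul (G.comp H) := by
  funext n b
  show (∑ c : Composition n, _) = ∑ k : Fin (n+1), _
  conv_lhs => simp only [comp, mul]
  conv_rhs => simp only [comp, mul, Finset.sum_mul_sum]
  rw [Finset.sum_sigma' Finset.univ (fun c : Composition n => Finset.univ)]
  conv_rhs => enter [2, k]; rw [← Finset.sum_product']
  rw [Finset.sum_sigma' Finset.univ (fun k : Fin (n+1) => Finset.univ ×ˢ Finset.univ)]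
  rw [show (Finset.univ.sigma fun c : Composition n => Finset.univ) = Finset.univ from Finset.univ_sigma_univ]
  rw [show (Finset.univ.sigma fun k : Fin (n+1) => Finset.univ ×ˢ Finset.univ) = Finset.univ from by simp]
  refine Fintype.sum_equiv (splitEquiv n) _ _ ?_
  rintro ⟨c, j⟩
  have hj := j.isLt
  have hcb : c.length = c.blocks.length := rfl
  simp only [splitEquiv, Equiv.coe_fn_mk]
  refine congrArg₂ HMul.hMul ?_ ?_
  · refine apply_congr F ?_ fun i h1 h2 => ?_
    · show (j:ℕ) = (List.take (↑j) c.blocks).length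
      rw [List.length_take]
      omega
    · refine apply_congr H ?_ fun l hl1 hl2 => ?_
      · simp [Composition.blocksFun]
      · refine congrArg b (Fin.ext ?_)
        change _ = (List.take i (List.take (↑j) c.blocks)).sum + l
        simp only [Composition.coe_embedding, Fin.coe_castLE, Composition.sizeUpTo,
          List.take_take, Nat.min_eq_left (show i ≤ (j:ℕ) by omega)]
  · refine apply_congr G ?_ fun i h1 h2 => ?_
    · show c.length - (j:ℕ) = (List.drop (↑j) c.blocks).length
      rw [List.length_drop]
    · refine apply_congr H ?_ fun l hl1 hl2 => ?_
      · simp [Composition.blocksFun]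
      · refine congrArg b (Fin.ext ?_)
        have hta : (c.blocks.take ((j:ℕ) + i)).sum
            = (c.blocks.take (j:ℕ)).sum + ((c.blocks.drop (j:ℕ)).take i).sum := by
          rw [List.take_add, List.sum_append]
        change c.sizeUpTo (↑j + i) + l = c.sizeUpTo ↑j + ((List.take i (List.drop (↑j) c.blocks)).sum + l)
        simp only [Composition.coe_embedding, Fin.coe_castLE, Composition.sizeUpTo]
        omega

end MLS

/-- An operator-valued probability space: a unital algebra `A` with a distinguished
unital subalgebra (given by the embedding `ι : B →ₐ[R] A`) and a conditional
expectation `E : A → B`. -/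
structure OVPS (R A B : Type*) [CommRing R] [Ring A] [Algebra R A] [Ring B] [Algebra R B] where
  ι : B →ₐ[R] A
  E : A →ₗ[R] B
  E_ι : ∀ b : B, E (ι b) = b
  E_bimodule : ∀ (b₁ b₂ : B) (a : A), E (ι b₁ * a * ι b₂) = b₁ * E a * b₂

/-- The operator-valued moment series `Φ_x = ∑ₙ E[x b₁ x ⋯ bₙ x]` of a random variable. -/
def OVPS.momentSeries {R A B : Type*} [CommRing R] [Ring A] [Algebra R A] [Ring B] [Algebra R B]
    (P : OVPS R A B) (x : A) : MLS B :=
  fun n b => P.E (x * (List.ofFn fun i : Fin n => P.ι (b i) * x).prod)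

/-- if `E[x]` is invertible, then `I·Φ_x = (I·C_x)∘[(1 + I·Φ_x)·I]`,
where `C` is the cumulant series of `x` (given by `Φ = (1+Φ·I)·C∘(I+I·Φ·I)`). -/
theorem ovps_I_mul_moment_eq {R A B : Type*} [CommRing R] [Ring A] [Algebra R A]
    [Ring B] [Algebra R B] (P : OVPS R A B) (x : A) (hx : IsUnit (P.E x))
    (C : MLS B) (hC : MLS.IsMultilinear R C)
    (hmc : P.momentSeries x =
      (MLS.one.add ((P.momentSeries x).mul MLS.idS)).mul
        (C.comp (MLS.idS.add ((MLS.idS.mul (P.momentSeries x)).mul MLS.idS)))) :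
    MLS.idS.mul (P.momentSeries x) =
      (MLS.idS.mul C).comp ((MLS.one.add (MLS.idS.mul (P.momentSeries x))).mul MLS.idS) := by
  set Φ := P.momentSeries x with hPhi
  set G0 := MLS.idS.add ((MLS.idS.mul Φ).mul MLS.idS) with hG0
  set K := C.comp G0 with hK
  have h0 : ∀ b0 : Fin 0 → B, G0 0 b0 = 0 := by
    intro b0
    simp [hG0, MLS.add, MLS.mul, MLS.idS]
  calc MLS.idS.mul Φ
      = MLS.idS.mul ((MLS.one.add (Φ.mul MLS.idS)).mul K) := congrArg MLS.idS.mul hmc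
    _ = MLS.idS.mul ((MLS.one.mul K).add ((Φ.mul MLS.idS).mul K)) := by rw [MLS.add_mul']
    _ = (MLS.idS.mul (MLS.one.mul K)).add (MLS.idS.mul ((Φ.mul MLS.idS).mul K)) := by
        rw [MLS.mul_add']
    _ = (MLS.idS.mul K).add (((MLS.idS.mul Φ).mul MLS.idS).mul K) := by
        rw [MLS.one_mul', ← MLS.mul_assoc', ← MLS.mul_assoc']
    _ = G0.mul K := by rw [hG0, MLS.add_mul']
    _ = (MLS.idS.comp G0).mul K := by rw [MLS.idS_comp _ h0]
    _ = (MLS.idS.mul C).comp ((MLS.one.add (MLS.idS.mul Φ)).mul MLS.idS) := by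
        rw [MLS.add_mul', MLS.one_mul', ← hG0, MLS.mul_comp, hK]
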